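/- Let δ ≥ 0, σ ≥ 1, l > 0, and r ∈ ℝ. For every function u with finite Gevrey norm ‖u‖_{G^δ_{σ, r + l/(2σ)}}, one has ‖u‖_{G^δ_{σ,r}} ≤ √e · ‖u‖_{H^r} + (2δ)^{l/2} · ‖u‖_{G^δ_{σ, r + l/(2σ)}}, where the Gevrey norm is ‖u‖_{G^δ_{σ,s}} = ( ∫ (1+|ξ|^2)^s e^{2δ(1+|ξ|^2)^{1/(2σ)}} |û(ξ)|^2 dξ )^{1/2} and ‖u‖_{H^r} = ( ∫ (1+|ξ|^2)^r |û(ξ)|^2 dξ )^{1/2}. -/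

import Mathlib

open MeasureTheory

/-- The Gevrey norm `‖u‖_{G^δ_{σ,s}}`, expressed through the Fourier transform `û` of `u`. -/
noncomputable def gevreyNorm (δ σ s : ℝ) (uhat : ℝ → ℂ) : ℝ :=
  (∫ ξ : ℝ, (1 + |ξ| ^ 2) ^ s * Real.exp (2 * δ * (1 + |ξ| ^ 2) ^ (1 / (2 * σ))) *
      ‖uhat ξ‖ ^ 2) ^ ((1 : ℝ) / 2)

/-- The Sobolev norm `‖u‖_{H^r}`, expressed through the Fourier transform `û` of `u`. -/
noncomputable def sobolevNorm (r : ℝ) (uhat : ℝ → ℂ) : ℝ :=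
  (∫ ξ : ℝ, (1 + |ξ| ^ 2) ^ r * ‖uhat ξ‖ ^ 2) ^ ((1 : ℝ) / 2)

private lemma sqrt_add_le' {a b : ℝ} (ha : 0 ≤ a) (hb : 0 ≤ b) :
    Real.sqrt (a + b) ≤ Real.sqrt a + Real.sqrt b := by
  have h1 := Real.sq_sqrt ha
  have h2 := Real.sq_sqrt hb
  have h3 := Real.sqrt_nonneg a
  have h4 := Real.sqrt_nonneg b
  have h : a + b ≤ (Real.sqrt a + Real.sqrt b) ^ 2 := by nlinarith
  calc Real.sqrt (a + b) ≤ Real.sqrt ((Real.sqrt a + Real.sqrt b) ^ 2) :=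
        Real.sqrt_le_sqrt h
    _ = Real.sqrt a + Real.sqrt b := Real.sqrt_sq (by positivity)

set_option maxHeartbeats 2000000 in
theorem gevrey_sobolev_interpolation (δ σ l r : ℝ) (hδ : 0 ≤ δ) (hσ : 1 ≤ σ) (hl : 0 < l)
    (uhat : ℝ → ℂ)
    (hint : Integrable (fun ξ : ℝ => (1 + |ξ| ^ 2) ^ (r + l / (2 * σ)) *
      Real.exp (2 * δ * (1 + |ξ| ^ 2) ^ (1 / (2 * σ))) * ‖uhat ξ‖ ^ 2)) :
    gevreyNorm δ σ r uhat ≤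
      Real.sqrt (Real.exp 1) * sobolevNorm r uhat +
        (2 * δ) ^ (l / 2) * gevreyNorm δ σ (r + l / (2 * σ)) uhat := by
  set C := fun ξ : ℝ => (1 + |ξ| ^ 2) ^ (r + l / (2 * σ)) *
      Real.exp (2 * δ * (1 + |ξ| ^ 2) ^ (1 / (2 * σ))) * ‖uhat ξ‖ ^ 2 with hC
  set B := fun ξ : ℝ => (1 + |ξ| ^ 2) ^ r * ‖uhat ξ‖ ^ 2 with hB
  set A := fun ξ : ℝ => (1 + |ξ| ^ 2) ^ r *
      Real.exp (2 * δ * (1 + |ξ| ^ 2) ^ (1 / (2 * σ))) * ‖uhat ξ‖ ^ 2 with hA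
  have hσ0 : 0 < 2 * σ := by linarith
  have h2δ : (0:ℝ) ≤ 2 * δ := by linarith
  have ht : ∀ ξ : ℝ, (1:ℝ) ≤ 1 + |ξ| ^ 2 := fun ξ => le_add_of_nonneg_right (by positivity)
  have hc0 : Continuous fun ξ:ℝ => 1 + |ξ| ^ 2 := continuous_const.add (continuous_abs.pow 2)
  have hBnn : ∀ ξ, 0 ≤ B ξ := fun ξ => by simp only [hB]; positivity
  have hCnn : ∀ ξ, 0 ≤ C ξ := fun ξ => by simp only [hC]; positivity
  have hAnn : ∀ ξ, 0 ≤ A ξ := fun ξ => by simp only [hA]; positivity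
  -- B ≤ C and A ≤ C pointwise
  have hBC : ∀ ξ, B ξ ≤ C ξ := by
    intro ξ
    simp only [hB, hC]
    have ht0 : (0:ℝ) < 1 + |ξ| ^ 2 := by positivity
    have h1 : (1 + |ξ| ^ 2 : ℝ) ^ r ≤ (1 + |ξ| ^ 2) ^ (r + l / (2 * σ)) :=
      Real.rpow_le_rpow_of_exponent_le (ht ξ) (le_add_of_nonneg_right (by positivity))
    have h2 : (1:ℝ) ≤ Real.exp (2 * δ * (1 + |ξ| ^ 2) ^ (1 / (2 * σ))) :=
      Real.one_le_exp (by positivity)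
    nlinarith [Real.rpow_nonneg ht0.le r, sq_nonneg ‖uhat ξ‖,
      mul_nonneg (Real.rpow_nonneg ht0.le (r + l / (2*σ))) (sq_nonneg ‖uhat ξ‖)]
  -- pointwise key bound
  have key : ∀ ξ : ℝ, A ξ ≤ Real.exp 1 * B ξ + (2 * δ) ^ l * C ξ := by
    intro ξ
    simp only [hA, hB, hC]
    set t := 1 + |ξ| ^ 2 with htdef
    have ht1 : (1:ℝ) ≤ t := ht ξ
    have ht0 : (0:ℝ) < t := by linarith
    set x := 2 * δ * t ^ (1 / (2 * σ)) with hxdef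
    have hx0 : 0 ≤ x := by positivity
    rcases le_or_gt x 1 with hx | hx
    · have hee : Real.exp x ≤ Real.exp 1 := Real.exp_le_exp.2 hx
      have h1 : t ^ r * Real.exp x * ‖uhat ξ‖ ^ 2 ≤ Real.exp 1 * (t ^ r * ‖uhat ξ‖ ^ 2) := by
        nlinarith [Real.rpow_nonneg ht0.le r, sq_nonneg ‖uhat ξ‖,
          mul_nonneg (Real.rpow_nonneg ht0.le r) (sq_nonneg ‖uhat ξ‖)]
      have h2 : 0 ≤ (2*δ) ^ l * (t ^ (r + l / (2*σ)) * Real.exp x * ‖uhat ξ‖ ^ 2) := by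
        positivity
      linarith
    · have hxl : (1:ℝ) ≤ x ^ l := Real.one_le_rpow hx.le hl.le
      have hxl' : x ^ l = (2*δ) ^ l * t ^ (l / (2*σ)) := by
        rw [hxdef, Real.mul_rpow h2δ (Real.rpow_nonneg ht0.le _),
          ← Real.rpow_mul ht0.le]
        congr 1
        field_simp
      have hsplit : t ^ (r + l / (2*σ)) = t ^ r * t ^ (l / (2*σ)) :=
        Real.rpow_add ht0 _ _
      have h0 : 0 ≤ t ^ r * Real.exp x * ‖uhat ξ‖ ^ 2 := by positivity
      have h1 : t ^ r * Real.exp x * ‖uhat ξ‖ ^ 2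
          ≤ x ^ l * (t ^ r * Real.exp x * ‖uhat ξ‖ ^ 2) := le_mul_of_one_le_left h0 hxl
      have h2 : x ^ l * (t ^ r * Real.exp x * ‖uhat ξ‖ ^ 2)
          = (2*δ) ^ l * (t ^ (r + l / (2*σ)) * Real.exp x * ‖uhat ξ‖ ^ 2) := by
        rw [hxl', hsplit]; ring
      have h3 : 0 ≤ Real.exp 1 * (t ^ r * ‖uhat ξ‖ ^ 2) := by positivity
      linarith [h1.trans_eq h2]
  -- measurability
  have hCmeas : AEStronglyMeasurable C volume := hint.aestronglyMeasurable
  have hBmeas : AEStronglyMeasurable B volume := by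
    have : B = fun ξ => ((1 + |ξ|^2) ^ (- (l / (2*σ))) *
        Real.exp (-(2 * δ * (1 + |ξ| ^ 2) ^ (1 / (2 * σ))))) * C ξ := by
      funext ξ
      have ht0 : (0:ℝ) < 1 + |ξ| ^ 2 := by positivity
      simp only [hB, hC]
      rw [Real.rpow_add ht0, Real.rpow_neg ht0.le, Real.exp_neg]
      have h1 : (1 + |ξ|^2 : ℝ) ^ (l / (2*σ)) ≠ 0 := by positivity
      have h2 : Real.exp (2 * δ * (1 + |ξ| ^ 2) ^ (1 / (2 * σ))) ≠ 0 := Real.exp_ne_zero _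
      field_simp
    rw [this]
    have hcpow : Continuous fun ξ:ℝ => (1 + |ξ|^2) ^ (-(l / (2*σ))) :=
      hc0.rpow_const (fun ξ => Or.inl (by show (1:ℝ) + |ξ|^2 ≠ 0; positivity))
    have hcexp : Continuous fun ξ:ℝ => Real.exp (-(2 * δ * (1 + |ξ| ^ 2) ^ (1 / (2 * σ)))) :=
      Real.continuous_exp.comp
        ((continuous_const.mul
          (hc0.rpow_const (fun ξ => Or.inl (by show (1:ℝ) + |ξ|^2 ≠ 0; positivity)))).neg)
    exact ((hcpow.mul hcexp).aestronglyMeasurable).mul hCmeas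
  have hAmeas : AEStronglyMeasurable A volume := by
    have : A = fun ξ => (1 + |ξ|^2) ^ (- (l / (2*σ))) * C ξ := by
      funext ξ
      have ht0 : (0:ℝ) < 1 + |ξ| ^ 2 := by positivity
      simp only [hA, hC]
      rw [Real.rpow_add ht0, Real.rpow_neg ht0.le]
      have h1 : (1 + |ξ|^2 : ℝ) ^ (l / (2*σ)) ≠ 0 := by positivity
      field_simp
    rw [this]
    exact ((hc0.rpow_const (fun ξ => Or.inl
      (by show (1:ℝ) + |ξ|^2 ≠ 0; positivity))).aestronglyMeasurable).mul hCmeas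
  -- integrability
  have hBint : Integrable B := by
    refine hint.mono hBmeas (Filter.Eventually.of_forall fun ξ => ?_)
    rw [Real.norm_of_nonneg (hBnn ξ), Real.norm_of_nonneg (hCnn ξ)]
    exact hBC ξ
  have hRHSint : Integrable (fun ξ => Real.exp 1 * B ξ + (2*δ) ^ l * C ξ) :=
    (hBint.const_mul _).add (hint.const_mul _)
  have hAint : Integrable A := by
    refine hRHSint.mono hAmeas (Filter.Eventually.of_forall fun ξ => ?_)
    rw [Real.norm_of_nonneg (hAnn ξ), Real.norm_of_nonneg (by positivity)]
    exact key ξ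
  -- integral inequality
  have hInt : ∫ ξ, A ξ ≤ Real.exp 1 * (∫ ξ, B ξ) + (2*δ) ^ l * ∫ ξ, C ξ := by
    have := integral_mono hAint hRHSint key
    rw [integral_add (hBint.const_mul _) (hint.const_mul _),
      MeasureTheory.integral_const_mul, MeasureTheory.integral_const_mul] at this
    exact this
  have hIA : 0 ≤ ∫ ξ, A ξ := integral_nonneg hAnn
  have hIB : 0 ≤ ∫ ξ, B ξ := integral_nonneg hBnn
  have hIC : 0 ≤ ∫ ξ, C ξ := integral_nonneg hCnn
  -- conclude
  have e1 : gevreyNorm δ σ r uhat = Real.sqrt (∫ ξ, A ξ) := by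
    rw [gevreyNorm, Real.sqrt_eq_rpow]
  have e2 : sobolevNorm r uhat = Real.sqrt (∫ ξ, B ξ) := by
    rw [sobolevNorm, Real.sqrt_eq_rpow]
  have e3 : gevreyNorm δ σ (r + l / (2*σ)) uhat = Real.sqrt (∫ ξ, C ξ) := by
    rw [gevreyNorm, Real.sqrt_eq_rpow]
  rw [e1, e2, e3]
  calc Real.sqrt (∫ ξ, A ξ)
      ≤ Real.sqrt (Real.exp 1 * (∫ ξ, B ξ) + (2*δ) ^ l * ∫ ξ, C ξ) :=
        Real.sqrt_le_sqrt hInt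
    _ ≤ Real.sqrt (Real.exp 1 * (∫ ξ, B ξ)) + Real.sqrt ((2*δ) ^ l * ∫ ξ, C ξ) :=
        sqrt_add_le' (by positivity) (by positivity)
    _ = Real.sqrt (Real.exp 1) * Real.sqrt (∫ ξ, B ξ) +
        (2*δ) ^ (l/2) * Real.sqrt (∫ ξ, C ξ) := by
        rw [Real.sqrt_mul (Real.exp_pos 1).le, Real.sqrt_mul (by positivity)]
        congr 2
        rw [Real.sqrt_eq_rpow, ← Real.rpow_mul h2δ]
        congr 1
        ring
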